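/- Let λ > 0 and let f ∈ L²(ℝ) be even with f = 0 a.e. on (−λ,λ). Let v be the unique even function in L²(ℝ) vanishing a.e. outside (−λ,λ) with v − D_λ v = P_λ(ℱf), where D_λ = (P_λ ℱ P_λ)². Then the orthogonal projection of f onto the Sonine space K_λ is the function equal to f(t) − (ℱv)(t) for a.e. t with |t| > λ and equal to 0 on (−λ,λ). -/

import Mathlib

open MeasureTheory Complex Set FourierTransform

noncomputable section

/-- `F` is the Fourier–Plancherel transform on `L²(ℝ)`: the unitary operator agreeing with
the Fourier integral `x ↦ ∫ y, exp(2πixy) f y` on integrable square-integrable functions. -/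
def IsFourierPlancherel
    (F : Lp ℂ 2 (volume : Measure ℝ) ≃ₗᵢ[ℂ] Lp ℂ 2 (volume : Measure ℝ)) : Prop :=
  ∀ (f : ℝ → ℂ) (_ : Integrable f volume) (hf : MemLp f 2 volume),
    (F (hf.toLp f) : ℝ → ℂ) =ᵐ[volume] (FourierTransformInv.fourierInv f : ℝ → ℂ)

/-- `P_λ` : multiplication by the indicator function of `(-λ, λ)` on `L²(ℝ)`. -/
def Pproj (lam : ℝ) (f : Lp ℂ 2 (volume : Measure ℝ)) : Lp ℂ 2 (volume : Measure ℝ) :=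
  ((Lp.memLp f).indicator (measurableSet_Ioo : MeasurableSet (Ioo (-lam) lam))).toLp _


/-- The Sonine space `K_λ`: even `f ∈ L²(ℝ)` with `f = 0` a.e. on `(−λ,λ)` and
`ℱf = 0` a.e. on `(−λ,λ)`. -/
def Kset (lam : ℝ)
    (F : Lp ℂ 2 (volume : Measure ℝ) ≃ₗᵢ[ℂ] Lp ℂ 2 (volume : Measure ℝ)) :
    Set (Lp ℂ 2 (volume : Measure ℝ)) :=
  {g | (∀ᵐ x : ℝ, g (-x) = g x) ∧
       (∀ᵐ x : ℝ, x ∈ Ioo (-lam) lam → g x = 0) ∧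
       (∀ᵐ x : ℝ, x ∈ Ioo (-lam) lam → (F g) x = 0)}

/-- The operator `F_λ = P_λ ℱ P_λ`. -/
def Fop (lam : ℝ)
    (F : Lp ℂ 2 (volume : Measure ℝ) ≃ₗᵢ[ℂ] Lp ℂ 2 (volume : Measure ℝ))
    (f : Lp ℂ 2 (volume : Measure ℝ)) : Lp ℂ 2 (volume : Measure ℝ) :=
  Pproj lam (F (Pproj lam f))

/-!
Put `q := f − ℱv + P_λ ℱv`, which is `f − ℱv` off `(−λ,λ)` and `0` on it. Then `q ∈ K_λ` and
`f − q = (1 − P_λ) ℱv ⊥ K_λ`, so `q` is the projection by uniqueness. Both facts rest on `ℱ² = R`,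
the reflection `g ↦ g(−·)`, which follows from the duality `⟪ℱa, h⟫ = ⟪a, Rℱh⟫` for integrable
`a, h` and the density of simple functions. It makes `ℱq = ℱf − v + ℱP_λℱv`, which vanishes on
`(−λ,λ)` by the equation for `v`; and for `g ∈ K_λ` (even, so `ℱ²g = g`) it gives
`⟪ℱv, g⟫ = ⟪v, ℱg⟫ = 0`, as `v` and `ℱg` live on complementary sets.
-/

local notation "L²" => Lp ℂ 2 (volume : Measure ℝ)

open scoped InnerProductSpace

lemma MeasureTheory.Lp.simpleFunc.integrable {α E : Type*} [MeasurableSpace α] {μ : Measure α}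
    [NormedAddCommGroup E] {p : ENNReal} (hp₀ : p ≠ 0) (hp : p ≠ ⊤) (g : Lp.simpleFunc E p μ) :
    Integrable (g : α → E) μ :=
  ((SimpleFunc.memLp_iff_integrable hp₀ hp).mp (Lp.simpleFunc.memLp g)).congr
    (Lp.simpleFunc.toSimpleFunc_eq_toFun g)

def reflect : L² →ₗᵢ[ℂ] L² :=
  Lp.compMeasurePreservingₗᵢ ℂ (fun x : ℝ => -x) (Measure.measurePreserving_neg volume)

lemma ae_comp_neg {P : ℝ → Prop} (h : ∀ᵐ x : ℝ, P x) : ∀ᵐ x : ℝ, P (-x) :=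
  (Measure.measurePreserving_neg volume).quasiMeasurePreserving.ae h

lemma coeFn_reflect (g : L²) : reflect g =ᵐ[volume] fun x => g (-x) :=
  Lp.coeFn_compMeasurePreserving g _

lemma reflect_reflect (g : L²) : reflect (reflect g) = g := by
  refine Lp.ext ((coeFn_reflect _).trans ?_)
  filter_upwards [ae_comp_neg (coeFn_reflect g)] with x hx
  rw [hx, neg_neg]

lemma inner_reflect_right (a b : L²) : ⟪a, reflect b⟫_ℂ = ⟪reflect a, b⟫_ℂ := by
  rw [← reflect.inner_map_map, reflect_reflect]

lemma reflect_eq_self_iff {g : L²} : reflect g = g ↔ ∀ᵐ x : ℝ, g (-x) = g x :=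
  ⟨fun h => (coeFn_reflect g).symm.trans (by rw [h]), fun h => Lp.ext ((coeFn_reflect g).trans h)⟩

namespace IsFourierPlancherel

variable {F : L² ≃ₗᵢ[ℂ] L²}

lemma coeFn_apply (hF : IsFourierPlancherel F) {g : L²} (hg : Integrable g) :
    F g =ᵐ[volume] 𝓕⁻ (g : ℝ → ℂ) := by
  simpa using hF g hg (Lp.memLp g)

lemma inner_apply_left (hF : IsFourierPlancherel F) {a h : L²} (ha : Integrable a)
    (hh : Integrable h) : ⟪F a, h⟫_ℂ = ⟪a, reflect (F h)⟫_ℂ := by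
  have hflip : -(-innerₗ ℝ : ℝ →ₗ[ℝ] ℝ →ₗ[ℝ] ℝ).flip = innerₗ ℝ :=
    LinearMap.ext₂ fun x y => by simp [mul_comm]
  have hfourier : (fun x => 𝓕⁻ (h : ℝ → ℂ) (-x)) = 𝓕 (h : ℝ → ℂ) := by
    ext x; rw [Real.fourierInv_eq_fourier_neg, neg_neg]
  rw [L2.inner_def, L2.inner_def]
  calc ∫ x, ⟪F a x, h x⟫_ℂ = ∫ x, ⟪𝓕⁻ (a : ℝ → ℂ) x, h x⟫_ℂ :=
        integral_congr_ae (by filter_upwards [hF.coeFn_apply ha] with x hx; rw [hx])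
    _ = ∫ x, ⟪a x, 𝓕 (h : ℝ → ℂ) x⟫_ℂ := by
        have := VectorFourier.integral_sesq_fourierIntegral_eq_neg_flip (innerSL ℂ)
          (L := -innerₗ ℝ) Real.continuous_fourierChar (by fun_prop) ha hh
        rwa [hflip] at this
    _ = ∫ x, ⟪a x, reflect (F h) x⟫_ℂ := by
        refine integral_congr_ae ?_
        filter_upwards [coeFn_reflect (F h), ae_comp_neg (hF.coeFn_apply hh)] with x h1 h2
        rw [h1, h2, ← hfourier]

lemma apply_apply (hF : IsFourierPlancherel F) (g : L²) : F (F g) = reflect g := by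
  have hdense := Lp.simpleFunc.denseRange (E := ℂ) (μ := (volume : Measure ℝ))
    (p := 2) ENNReal.ofNat_ne_top
  have hint := Lp.simpleFunc.integrable (μ := (volume : Measure ℝ)) (E := ℂ) two_ne_zero
    ENNReal.ofNat_ne_top
  have hsimple (a : Lp.simpleFunc ℂ 2 (volume : Measure ℝ)) : F a = F.symm (reflect a) :=
    hdense.eq_of_inner_left ℂ fun h => by
      rw [hF.inner_apply_left (hint a) (hint h), inner_reflect_right, F.symm.inner_map_eq_flip,
        F.symm_symm]
  refine congrFun (hdense.equalizer (F.continuous.comp F.continuous) reflect.continuous ?_) g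
  funext a
  simp only [Function.comp_apply, hsimple, F.apply_symm_apply]

lemma reflect_apply (hF : IsFourierPlancherel F) (g : L²) : reflect (F g) = F (reflect g) := by
  rw [← hF.apply_apply, ← hF.apply_apply g]

end IsFourierPlancherel

lemma MeasureTheory.L2.inner_eq_zero_of_vanishing_off_of_vanishing_on {α 𝕜 E : Type*}
    [MeasurableSpace α] {μ : Measure α} [RCLike 𝕜] [NormedAddCommGroup E] [InnerProductSpace 𝕜 E]
    (s : Set α) {a b : Lp E 2 μ} (ha : ∀ᵐ x ∂μ, x ∉ s → a x = 0)
    (hb : ∀ᵐ x ∂μ, x ∈ s → b x = 0) : ⟪a, b⟫_𝕜 = 0 := by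
  rw [L2.inner_def, ← integral_zero α 𝕜]
  refine integral_congr_ae ?_
  filter_upwards [ha, hb] with x hax hbx
  by_cases hx : x ∈ s
  · simp [hbx hx]
  · simp [hax hx]

lemma eq_of_mem_of_inner_sub_eq_zero {𝕜 E : Type*} [RCLike 𝕜] [NormedAddCommGroup E]
    [InnerProductSpace 𝕜 E] {K : Set E} (hK : ∀ a ∈ K, ∀ b ∈ K, a - b ∈ K) {f p q : E}
    (hp : p ∈ K) (hq : q ∈ K) (hpf : ∀ g ∈ K, ⟪f - p, g⟫_𝕜 = 0)
    (hqf : ∀ g ∈ K, ⟪f - q, g⟫_𝕜 = 0) : p = q := by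
  have hpq := hK p hp q hq
  rw [← sub_eq_zero, ← inner_self_eq_zero (𝕜 := 𝕜)]
  calc ⟪p - q, p - q⟫_𝕜 = ⟪f - q, p - q⟫_𝕜 - ⟪f - p, p - q⟫_𝕜 := by
        rw [← inner_sub_left, sub_sub_sub_cancel_left]
    _ = 0 := by rw [hpf _ hpq, hqf _ hpq, sub_zero]

section Pproj

variable {lam : ℝ}

lemma coeFn_Pproj (lam : ℝ) (g : L²) : Pproj lam g =ᵐ[volume] (Ioo (-lam) lam).indicator g :=
  MemLp.coeFn_toLp _

lemma Pproj_apply_of_mem (lam : ℝ) (g : L²) :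
    ∀ᵐ x : ℝ, x ∈ Ioo (-lam) lam → Pproj lam g x = g x := by
  filter_upwards [coeFn_Pproj lam g] with x hx hmem
  rw [hx, indicator_of_mem hmem]

lemma Pproj_eq_self {g : L²} (hg : ∀ᵐ x : ℝ, x ∉ Ioo (-lam) lam → g x = 0) : Pproj lam g = g := by
  refine Lp.ext ((coeFn_Pproj lam g).trans ?_)
  filter_upwards [hg] with x hx
  by_cases hmem : x ∈ Ioo (-lam) lam
  · rw [indicator_of_mem hmem]
  · rw [indicator_of_notMem hmem, hx hmem]

lemma Pproj_Pproj (g : L²) : Pproj lam (Pproj lam g) = Pproj lam g :=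
  Pproj_eq_self (by filter_upwards [coeFn_Pproj lam g] with x hx h; rw [hx, indicator_of_notMem h])

lemma reflect_Pproj (g : L²) : reflect (Pproj lam g) = Pproj lam (reflect g) := by
  have hsymm (x : ℝ) : -x ∈ Ioo (-lam) lam ↔ x ∈ Ioo (-lam) lam := by
    rw [neg_mem_Ioo_iff, neg_neg]
  refine Lp.ext ?_
  filter_upwards [coeFn_reflect (Pproj lam g), ae_comp_neg (coeFn_Pproj lam g),
    coeFn_Pproj lam (reflect g), coeFn_reflect g] with x h1 h2 h3 h4
  by_cases hmem : x ∈ Ioo (-lam) lam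
  · rw [h1, h2, h3, indicator_of_mem ((hsymm x).2 hmem), indicator_of_mem hmem, h4]
  · rw [h1, h2, h3, indicator_of_notMem (mt (hsymm x).1 hmem), indicator_of_notMem hmem]

end Pproj

section Sonine

variable {lam : ℝ} {F : L² ≃ₗᵢ[ℂ] L²}

lemma sub_mem_Kset {a b : L²} (ha : a ∈ Kset lam F) (hb : b ∈ Kset lam F) :
    a - b ∈ Kset lam F := by
  obtain ⟨ha_even, ha_zero, ha_fourier⟩ := ha
  obtain ⟨hb_even, hb_zero, hb_fourier⟩ := hb
  refine ⟨?_, ?_, ?_⟩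
  · rw [← reflect_eq_self_iff] at ha_even hb_even ⊢
    rw [map_sub, ha_even, hb_even]
  · filter_upwards [Lp.coeFn_sub a b, ha_zero, hb_zero] with x h hax hbx hx
    rw [h, Pi.sub_apply, hax hx, hbx hx, sub_zero]
  · filter_upwards [map_sub F a b ▸ Lp.coeFn_sub (F a) (F b), ha_fourier, hb_fourier]
      with x h hax hbx hx
    rw [h, Pi.sub_apply, hax hx, hbx hx, sub_zero]

lemma inner_Pproj_eq_zero_of_mem_Kset (u : L²) {g : L²} (hg : g ∈ Kset lam F) :
    ⟪Pproj lam u, g⟫_ℂ = 0 :=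
  L2.inner_eq_zero_of_vanishing_off_of_vanishing_on _
    (by filter_upwards [coeFn_Pproj lam u] with x hx h; rw [hx, indicator_of_notMem h]) hg.2.1

lemma IsFourierPlancherel.inner_apply_eq_zero_of_mem_Kset (hF : IsFourierPlancherel F) {v g : L²}
    (hv : ∀ᵐ x : ℝ, x ∉ Ioo (-lam) lam → v x = 0) (hg : g ∈ Kset lam F) : ⟪F v, g⟫_ℂ = 0 := by
  have hFFg : F (F g) = g := by rw [hF.apply_apply, reflect_eq_self_iff.2 hg.1]
  rw [← hFFg, F.inner_map_map]
  exact L2.inner_eq_zero_of_vanishing_off_of_vanishing_on _ hv hg.2.2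

lemma IsFourierPlancherel.sub_add_Pproj_mem_Kset (hF : IsFourierPlancherel F) {f v : L²}
    (heven : ∀ᵐ x : ℝ, f (-x) = f x) (hf0 : ∀ᵐ x : ℝ, x ∈ Ioo (-lam) lam → f x = 0)
    (hve : ∀ᵐ x : ℝ, v (-x) = v x) (hvs : ∀ᵐ x : ℝ, x ∉ Ioo (-lam) lam → v x = 0)
    (hv : v - Fop lam F (Fop lam F v) = Pproj lam (F f)) :
    f - F v + Pproj lam (F v) ∈ Kset lam F := by
  rw [← reflect_eq_self_iff] at heven hve
  simp only [Fop, Pproj_eq_self hvs, Pproj_Pproj] at hv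
  have hv_on : ∀ᵐ x : ℝ, x ∈ Ioo (-lam) lam → v x - F (Pproj lam (F v)) x = F f x := by
    filter_upwards [congrArg (fun g : L² => (g : ℝ → ℂ)) hv ▸ Lp.coeFn_sub v _,
      Pproj_apply_of_mem lam (F (Pproj lam (F v))), Pproj_apply_of_mem lam (F f)]
      with x h h₁ h₂ hx
    rw [← h₁ hx, ← h₂ hx, h, Pi.sub_apply]
  refine ⟨?_, ?_, ?_⟩
  · rw [← reflect_eq_self_iff, map_add, map_sub, reflect_Pproj, hF.reflect_apply, hve, heven]
  · filter_upwards [Lp.coeFn_add (f - F v) (Pproj lam (F v)), Lp.coeFn_sub f (F v),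
      Pproj_apply_of_mem lam (F v), hf0] with x h₁ h₂ h₃ hf hx
    rw [h₁, Pi.add_apply, h₂, Pi.sub_apply, h₃ hx, hf hx, zero_sub, neg_add_cancel]
  · have hFq : F (f - F v + Pproj lam (F v)) = F f - v + F (Pproj lam (F v)) := by
      rw [map_add, map_sub, hF.apply_apply, hve]
    filter_upwards [hFq ▸ Lp.coeFn_add (F f - v) (F (Pproj lam (F v))), Lp.coeFn_sub (F f) v,
      hv_on] with x h₁ h₂ h₃ hx
    rw [h₁, Pi.add_apply, h₂, Pi.sub_apply, ← h₃ hx]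
    ring

end Sonine

theorem projection_onto_sonine_of_vanishing_general (lam : ℝ)
    (F : Lp ℂ 2 (volume : Measure ℝ) ≃ₗᵢ[ℂ] Lp ℂ 2 (volume : Measure ℝ))
    (hF : IsFourierPlancherel F)
    (f v : Lp ℂ 2 (volume : Measure ℝ))
    (heven : ∀ᵐ x : ℝ, f (-x) = f x)
    (hf0 : ∀ᵐ x : ℝ, x ∈ Ioo (-lam) lam → f x = 0)
    (hve : ∀ᵐ x : ℝ, v (-x) = v x) (hvs : ∀ᵐ x : ℝ, x ∉ Ioo (-lam) lam → v x = 0)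
    (hv : v - Fop lam F (Fop lam F v) = Pproj lam (F f)) :
    ∀ p : Lp ℂ 2 (volume : Measure ℝ),
      p ∈ Kset lam F → (∀ g ∈ Kset lam F, inner (𝕜 := ℂ) (f - p) g = (0 : ℂ)) →
      (∀ᵐ t : ℝ, lam < |t| → p t = f t - (F v) t) ∧
      (∀ᵐ t : ℝ, t ∈ Ioo (-lam) lam → p t = 0) := by
  intro p hp hp_orth
  have hq := hF.sub_add_Pproj_mem_Kset heven hf0 hve hvs hv
  have hq_orth : ∀ g ∈ Kset lam F, ⟪f - (f - F v + Pproj lam (F v)), g⟫_ℂ = 0 := by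
    intro g hg
    rw [sub_add_eq_sub_sub, sub_sub_cancel, inner_sub_left,
      hF.inner_apply_eq_zero_of_mem_Kset hvs hg, inner_Pproj_eq_zero_of_mem_Kset _ hg, sub_zero]
  obtain rfl := eq_of_mem_of_inner_sub_eq_zero (fun _ ha _ hb => sub_mem_Kset ha hb) hp hq
    hp_orth hq_orth
  refine ⟨?_, hq.2.1⟩
  filter_upwards [Lp.coeFn_add (f - F v) (Pproj lam (F v)), Lp.coeFn_sub f (F v),
    coeFn_Pproj lam (F v)] with t h₁ h₂ h₃ ht
  have hmem : t ∉ Ioo (-lam) lam := fun h => ht.not_gt (abs_lt.2 h)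
  rw [h₁, Pi.add_apply, h₂, h₃, indicator_of_notMem hmem, add_zero, Pi.sub_apply]

/-- If `f ∈ L²(ℝ)` is even and vanishes a.e. on `(−λ,λ)`, and `v − D_λ v = P_λ ℱf`,
then the orthogonal projection of `f` onto the Sonine space `K_λ` equals
`f − ℱv` for `|t| > λ` and vanishes on `(−λ,λ)`. -/
theorem projection_onto_sonine_of_vanishing (lam : ℝ) (hlam : 0 < lam)
    (F : Lp ℂ 2 (volume : Measure ℝ) ≃ₗᵢ[ℂ] Lp ℂ 2 (volume : Measure ℝ))
    (hF : IsFourierPlancherel F)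
    (f v : Lp ℂ 2 (volume : Measure ℝ))
    (heven : ∀ᵐ x : ℝ, f (-x) = f x)
    (hf0 : ∀ᵐ x : ℝ, x ∈ Ioo (-lam) lam → f x = 0)
    (hve : ∀ᵐ x : ℝ, v (-x) = v x) (hvs : ∀ᵐ x : ℝ, x ∉ Ioo (-lam) lam → v x = 0)
    (hv : v - Fop lam F (Fop lam F v) = Pproj lam (F f)) :
    ∀ p : Lp ℂ 2 (volume : Measure ℝ),
      p ∈ Kset lam F → (∀ g ∈ Kset lam F, inner (𝕜 := ℂ) (f - p) g = (0 : ℂ)) →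
      (∀ᵐ t : ℝ, lam < |t| → p t = f t - (F v) t) ∧
      (∀ᵐ t : ℝ, t ∈ Ioo (-lam) lam → p t = 0) :=
  projection_onto_sonine_of_vanishing_general lam F hF f v heven hf0 hve hvs hv
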